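/- arXiv:1709.03740 — 3 statements merged into one kernel-verified Lean document; each statement's English description precedes it below -/
import Mathlib

section
/- Let A_n denote the unital subalgebra of ℰ_{n+1}(u) generated by T_1,…,T_{n−1}, E_1,…,E_{n−1}. Then every element of ℰ_{n+1}(u) lies in the K-linear span of A_n together with all products Y_iY_{i+1}⋯Y_n·x, where 1 ≤ i ≤ n, each Y_j ∈ {T_j, E_j, T_jE_j}, and x ∈ A_n. -/
noncomputable section

open FreeAlgebra

/-- The base field `K = ℂ(u)`, the field of rational functions over `ℂ`. -/
abbrev K : Type := RatFunc ℂ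

/-- The distinguished element `u` of `K = ℂ(u)`. -/
def u : K := RatFunc.X

/-- Generators of the algebra `ℰ_n(u)`: `T i` and `E i` for `i` ranging over `n - 1` indices. -/
inductive Gen (n : ℕ) : Type
  | T : Fin (n - 1) → Gen n
  | E : Fin (n - 1) → Gen n

/-- The free `K`-algebra on the generators. -/
abbrev FA (n : ℕ) : Type := FreeAlgebra K (Gen n)

def fT {n : ℕ} (i : Fin (n - 1)) : FA n := ι K (Gen.T i)
def fE {n : ℕ} (i : Fin (n - 1)) : FA n := ι K (Gen.E i)

/-- The defining relations of `ℰ_n(u)`. -/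
inductive EnRel (n : ℕ) : FA n → FA n → Prop
  | TTfar {i j : Fin (n - 1)} : 1 < Nat.dist i j →
      EnRel n (fT i * fT j) (fT j * fT i)
  | braid {i j : Fin (n - 1)} : Nat.dist i j = 1 →
      EnRel n (fT i * fT j * fT i) (fT j * fT i * fT j)
  | Eidem (i : Fin (n - 1)) : EnRel n (fE i * fE i) (fE i)
  | EE (i j : Fin (n - 1)) : EnRel n (fE i * fE j) (fE j * fE i)
  | ET (i : Fin (n - 1)) : EnRel n (fE i * fT i) (fT i * fE i)
  | ETfar {i j : Fin (n - 1)} : 1 < Nat.dist i j →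
      EnRel n (fE i * fT j) (fT j * fE i)
  | ETT {i j : Fin (n - 1)} : Nat.dist i j = 1 →
      EnRel n (fE j * (fT i * fT j)) (fT i * fT j * fE i)
  | EET {i j : Fin (n - 1)} : Nat.dist i j = 1 →
      EnRel n (fE i * fE j * fT j) (fE i * fT j * fE i)
  | ETE {i j : Fin (n - 1)} : Nat.dist i j = 1 →
      EnRel n (fE i * fT j * fE i) (fT j * (fE i * fE j))
  | Tsq (i : Fin (n - 1)) :
      EnRel n (fT i * fT i) (1 + (u⁻¹ - 1) • (fE i * (1 - fT i)))

/-- The algebra `ℰ_n(u)`, as a quotient of the free algebra by the defining relations. -/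
abbrev En (n : ℕ) : Type := RingQuot (EnRel n)

/-- The generator `T i` of `ℰ_n(u)`. -/
def T {n : ℕ} (i : Fin (n - 1)) : En n := RingQuot.mkAlgHom K (EnRel n) (fT i)

/-- The generator `E i` of `ℰ_n(u)`. -/
def E {n : ℕ} (i : Fin (n - 1)) : En n := RingQuot.mkAlgHom K (EnRel n) (fE i)

/-- The unital subalgebra `A_n` of `ℰ_{n+1}(u)` generated by
`T_1, …, T_{n-1}, E_1, …, E_{n-1}` (here indexed by `0, …, n-2`). -/
def An (n : ℕ) : Subalgebra K (En (n + 1)) :=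
  Algebra.adjoin K
    {x : En (n + 1) | ∃ i : Fin n, (i : ℕ) < n - 1 ∧ (x = T (n := n + 1) i ∨ x = E (n := n + 1) i)}

/-! Indices start at `0`: the generators of `ℰ_{n+1}(u)` are `T k`, `E k` for `k < n`, and `A_n`
is generated by those with `k < n - 1`. The span `M` of the statement contains `1 ∈ A_n`, so it is the whole algebra once it is stable under left multiplication by each generator `g` at
`k`. Take a spanning product `Y_i ⋯ Y_{n-1} x` with letters `Y_j ∈ {T_j, E_j, T_j E_j}`.
If `k + 1 < i`, `g` commutes with all letters and is absorbed into `x`; if `k + 1 = i`, it is a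
new letter; if `k = i`, `g Y_k` lies in the span of `1` and the letters at `k`. If `k > i`, `g`
commutes past `Y_i ⋯ Y_{k-2}`, and the defining relations together with the invertibility of
`T_{k-1}` rewrite `g Y_{k-1} Y_k` as a combination of products `Y'_{k-1} Y'_k h` with `h` in the
subalgebra generated by `T_{k-1}` and `E_{k-1}`; this `h` commutes with `Y_{k+1} ⋯ Y_{n-1}` and is
absorbed into `x`. -/

section ProdIco

variable {M : Type*} [Monoid M]

def prodIco (Y : ℕ → M) (i j : ℕ) : M := ((List.Ico i j).map Y).prod

theorem prodIco_of_le (Y : ℕ → M) {i j : ℕ} (h : j ≤ i) : prodIco Y i j = 1 := by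
  simp [prodIco, List.Ico.eq_nil_of_le h]

theorem prodIco_eq_mul (Y : ℕ → M) {i j : ℕ} (h : i < j) :
    prodIco Y i j = Y i * prodIco Y (i + 1) j := by
  simp [prodIco, List.Ico.eq_cons h]

theorem prodIco_mul_prodIco (Y : ℕ → M) {i k j : ℕ} (h₁ : i ≤ k) (h₂ : k ≤ j) :
    prodIco Y i k * prodIco Y k j = prodIco Y i j := by
  rw [prodIco, prodIco, prodIco, ← List.prod_append, ← List.map_append,
    List.Ico.append_consecutive h₁ h₂]

theorem prodIco_congr {Y Z : ℕ → M} {i j : ℕ} (h : ∀ m, i ≤ m → m < j → Y m = Z m) :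
    prodIco Y i j = prodIco Z i j :=
  congrArg List.prod <| List.map_congr_left fun m hm =>
    h m (List.Ico.mem.1 hm).1 (List.Ico.mem.1 hm).2

theorem Commute.prodIco_right {z : M} {Y : ℕ → M} {i j : ℕ}
    (h : ∀ m, i ≤ m → m < j → Commute z (Y m)) : Commute z (prodIco Y i j) :=
  Commute.list_prod_right _ _ fun _ hy => by
    obtain ⟨m, hm, rfl⟩ := List.mem_map.1 hy
    exact h m (List.Ico.mem.1 hm).1 (List.Ico.mem.1 hm).2

end ProdIco

namespace En

section Relations

variable {N : ℕ} {i j a b : Fin (N - 1)}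

local notation "κ" => (u⁻¹ - 1 : K)

theorem commute_T_T_of_far (h : 1 < Nat.dist i j) : Commute (T i) (T j) := by
  simpa only [T, map_mul, Commute, SemiconjBy] using RingQuot.mkAlgHom_rel K (EnRel.TTfar h)

theorem commute_E_T_of_far (h : 1 < Nat.dist i j) : Commute (E i) (T j) := by
  simpa only [T, E, map_mul, Commute, SemiconjBy] using RingQuot.mkAlgHom_rel K (EnRel.ETfar h)

theorem commute_E_E (i j : Fin (N - 1)) : Commute (E i) (E j) := by
  simpa only [E, map_mul, Commute, SemiconjBy] using RingQuot.mkAlgHom_rel K (EnRel.EE i j)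

theorem commute_E_T (i : Fin (N - 1)) : Commute (E i) (T i) := by
  simpa only [T, E, map_mul, Commute, SemiconjBy] using RingQuot.mkAlgHom_rel K (EnRel.ET i)

-- A trailing factor `w` lets these identities rewrite inside right-nested products.
variable (w : En N)

theorem E_mul_E_self_mul (i : Fin (N - 1)) : E i * (E i * w) = E i * w := by
  simpa only [E, map_mul, mul_assoc] using
    congrArg (· * w) (RingQuot.mkAlgHom_rel K (EnRel.Eidem i))

theorem T_mul_T_mul_T_of_adj (h : Nat.dist i j = 1) :
    T i * (T j * (T i * w)) = T j * (T i * (T j * w)) := by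
  simpa only [T, map_mul, mul_assoc] using
    congrArg (· * w) (RingQuot.mkAlgHom_rel K (EnRel.braid h))

theorem E_mul_T_mul_T_of_adj (h : Nat.dist i j = 1) :
    E j * (T i * (T j * w)) = T i * (T j * (E i * w)) := by
  simpa only [T, E, map_mul, mul_assoc] using
    congrArg (· * w) (RingQuot.mkAlgHom_rel K (EnRel.ETT h))

theorem E_mul_E_mul_T_of_adj (h : Nat.dist i j = 1) :
    E i * (E j * (T j * w)) = E i * (T j * (E i * w)) := by
  simpa only [T, E, map_mul, mul_assoc] using
    congrArg (· * w) (RingQuot.mkAlgHom_rel K (EnRel.EET h))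

theorem E_mul_T_mul_E_of_adj (h : Nat.dist i j = 1) :
    E i * (T j * (E i * w)) = T j * (E i * (E j * w)) := by
  simpa only [T, E, map_mul, mul_assoc] using
    congrArg (· * w) (RingQuot.mkAlgHom_rel K (EnRel.ETE h))

theorem T_mul_T_self_mul (i : Fin (N - 1)) :
    T i * (T i * w) = w + κ • (E i * w) - κ • (E i * (T i * w)) := by
  simpa only [T, E, map_mul, map_add, map_one, map_sub, map_smul, mul_assoc, add_mul, one_mul,
    smul_mul_assoc, mul_sub, sub_mul, mul_one, smul_sub, add_sub_assoc]
    using congrArg (· * w) (RingQuot.mkAlgHom_rel K (EnRel.Tsq i))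

def Tinv (i : Fin (N - 1)) : En N := T i + (u - 1) • (E i * (T i - 1))

theorem T_mul_Tinv_mul (i : Fin (N - 1)) : T i * (Tinv i * w) = w := by
  have hκ : κ + (u - 1) + (u - 1) * κ = 0 := by
    have : u ≠ 0 := RatFunc.X_ne_zero
    field_simp
    ring
  have hT := T_mul_T_self_mul w i
  simp only [Tinv, add_mul, smul_mul_assoc, sub_mul, mul_assoc, one_mul, mul_add, mul_sub,
    mul_smul_comm, (commute_E_T i).symm.left_comm, hT, E_mul_E_self_mul]
  generalize E i * w = A, E i * (T i * w) = B
  calc _ = w + (κ + (u - 1) + (u - 1) * κ) • (A - B) := by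
        simp only [smul_sub, smul_add, smul_smul, add_smul]; abel
    _ = w := by rw [hκ, zero_smul, add_zero]

theorem T_mul_E_mul_Tinv_mul (i : Fin (N - 1)) : T i * (E i * (Tinv i * w)) = E i * w := by
  rw [← (commute_E_T i).left_comm, T_mul_Tinv_mul]

theorem E_mul_T_mul_of_adj (h : Nat.dist i j = 1) :
    E i * (T j * w) = T j * (T i * (E j * (Tinv i * w))) := by
  conv_lhs => rw [← T_mul_Tinv_mul w i]
  exact E_mul_T_mul_T_of_adj _ (Nat.dist_comm i j ▸ h)

/-! Multiplication table for adjacent indices `a`, `b`: `Adj.g_La_Lb` rewrites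
`g * (La * (Lb * w))`, for `g ∈ {T b, E b}`, `La ∈ {T a, E a, T a * E a}` and
`Lb ∈ {T b, E b, T b * E b}`, as a combination of products `La' * (Lb' * (h * w))` with `h` in
the subalgebra generated by `T a` and `E a`. -/
namespace Adj

theorem T_T_T (hd : Nat.dist a b = 1) : T b * (T a * (T b * w)) = T a * (T b * (T a * w)) :=
  T_mul_T_mul_T_of_adj w (Nat.dist_comm a b ▸ hd)

theorem T_T_E (hd : Nat.dist a b = 1) : T b * (T a * (E b * w)) = E a * (T b * (T a * w)) :=
  (E_mul_T_mul_T_of_adj w (Nat.dist_comm a b ▸ hd)).symm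

theorem T_T_TE (hd : Nat.dist a b = 1) :
    T b * (T a * ((T b * E b) * w)) = (T a * E a) * (T b * (T a * w)) := by
  simp only [mul_assoc]
  rw [T_T_T _ hd, T_T_E w hd]

theorem T_E_T (hd : Nat.dist a b = 1) :
    T b * (E a * (T b * w)) = T a * (E b * (Tinv a * w)) +
      κ • (T a * (E b * ((E a * Tinv a) * w))) - κ • (E a * (T b * (E a * w))) := by
  have hd' := Nat.dist_comm a b ▸ hd
  simp only [mul_assoc]
  rw [E_mul_T_mul_of_adj w hd, T_mul_T_self_mul, E_mul_T_mul_E_of_adj _ hd',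
    (commute_E_T b).left_comm, E_mul_T_mul_E_of_adj _ hd', T_T_E _ hd, T_mul_E_mul_Tinv_mul]

theorem T_E_E (hd : Nat.dist a b = 1) : T b * (E a * (E b * w)) = E a * (T b * (E a * w)) :=
  (E_mul_T_mul_E_of_adj w hd).symm

theorem T_E_TE (hd : Nat.dist a b = 1) :
    T b * (E a * ((T b * E b) * w)) = (T a * E a) * (E b * (Tinv a * w)) +
      κ • ((T a * E a) * (E b * ((E a * Tinv a) * w))) - κ • (E a * (T b * (E a * w))) := by
  rw [mul_assoc, ← (commute_E_T b).left_comm, T_E_E _ hd, T_E_T w hd]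
  simp only [mul_add, mul_sub, mul_smul_comm, mul_assoc]
  rw [(commute_E_T a).left_comm, (commute_E_T a).left_comm, E_mul_E_self_mul]

theorem T_TE_T (hd : Nat.dist a b = 1) :
    T b * ((T a * E a) * (T b * w)) = T a * ((T b * E b) * (Tinv a * w)) +
      κ • ((T a * E a) * (T b * ((E a * Tinv a) * w))) -
      κ • ((T a * E a) * (T b * (E a * w))) := by
  have hd' := Nat.dist_comm a b ▸ hd
  simp only [mul_assoc]
  rw [E_mul_T_mul_of_adj w hd, T_mul_T_mul_T_of_adj _ hd', T_mul_T_self_mul]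
  simp only [mul_add, mul_sub, mul_smul_comm]
  rw [T_E_E _ hd, (commute_E_T a).left_comm, (commute_E_E a b).left_comm, T_T_E _ hd,
    T_mul_E_mul_Tinv_mul]

theorem T_TE_E (hd : Nat.dist a b = 1) :
    T b * ((T a * E a) * (E b * w)) = E a * (T b * ((T a * E a) * w)) := by
  simp only [mul_assoc]
  rw [(commute_E_E a b).left_comm, T_T_E _ hd]

theorem T_TE_TE (hd : Nat.dist a b = 1) :
    T b * ((T a * E a) * ((T b * E b) * w)) = (T a * E a) * ((T b * E b) * (Tinv a * w)) +
      κ • ((T a * E a) * (T b * ((E a * Tinv a) * w))) -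
      κ • ((T a * E a) * (T b * (E a * w))) := by
  rw [mul_assoc (T b), ← (commute_E_T b).left_comm, T_TE_E _ hd, T_TE_T w hd]
  simp only [mul_add, mul_sub, mul_smul_comm, mul_assoc, (commute_E_T a).left_comm,
    E_mul_E_self_mul]

theorem E_T_T (hd : Nat.dist a b = 1) : E b * (T a * (T b * w)) = T a * (T b * (E a * w)) :=
  E_mul_T_mul_T_of_adj w hd

theorem E_T_E (hd : Nat.dist a b = 1) : E b * (T a * (E b * w)) = T a * (E b * (E a * w)) :=
  E_mul_T_mul_E_of_adj w (Nat.dist_comm a b ▸ hd)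

theorem E_T_TE (hd : Nat.dist a b = 1) :
    E b * (T a * ((T b * E b) * w)) = T a * ((T b * E b) * (E a * w)) := by
  simp only [mul_assoc]
  rw [E_T_T _ hd, (commute_E_E a b).left_comm]

theorem E_E_T (hd : Nat.dist a b = 1) : E b * (E a * (T b * w)) = E a * (T b * (E a * w)) := by
  rw [(commute_E_E b a).left_comm]
  exact E_mul_E_mul_T_of_adj w hd

theorem E_E_E : E b * (E a * (E b * w)) = E a * (E b * w) := by
  rw [(commute_E_E b a).left_comm, E_mul_E_self_mul]

theorem E_E_TE (hd : Nat.dist a b = 1) :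
    E b * (E a * ((T b * E b) * w)) = E a * (T b * (E a * w)) := by
  rw [mul_assoc, ← (commute_E_T b).left_comm, E_E_E]
  exact E_mul_E_mul_T_of_adj w hd

theorem E_TE_T (hd : Nat.dist a b = 1) :
    E b * ((T a * E a) * (T b * w)) = (T a * E a) * (T b * (E a * w)) := by
  simp only [mul_assoc]
  rw [E_mul_T_mul_of_adj w hd, E_T_T _ hd, (commute_E_T a).left_comm,
    (commute_E_E a b).left_comm, T_T_E _ hd, T_mul_E_mul_Tinv_mul]

theorem E_TE_E (hd : Nat.dist a b = 1) :
    E b * ((T a * E a) * (E b * w)) = T a * (E b * (E a * w)) := by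
  simp only [mul_assoc]
  rw [(commute_E_E a b).left_comm, E_T_E _ hd, E_mul_E_self_mul]

theorem E_TE_TE (hd : Nat.dist a b = 1) :
    E b * ((T a * E a) * ((T b * E b) * w)) = (T a * E a) * ((T b * E b) * w) := by
  simp only [mul_assoc]
  rw [← (commute_E_T b).left_comm, (commute_E_E a b).left_comm, E_T_E _ hd, E_mul_E_self_mul,
    (commute_E_E b a).left_comm, (commute_E_T b).left_comm]

end Adj

theorem T_mul_TE_self_mul (i : Fin (N - 1)) :
    T i * ((T i * E i) * w) = E i * w + κ • (E i * w) - κ • ((T i * E i) * w) := by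
  rw [mul_assoc, T_mul_T_self_mul, E_mul_E_self_mul, (commute_E_T i).left_comm, E_mul_E_self_mul]

theorem E_mul_T_self_mul (i : Fin (N - 1)) : E i * (T i * w) = (T i * E i) * w := by
  rw [(commute_E_T i).left_comm, mul_assoc]

theorem E_mul_TE_self_mul (i : Fin (N - 1)) : E i * ((T i * E i) * w) = (T i * E i) * w := by
  rw [mul_assoc, (commute_E_T i).left_comm, E_mul_E_self_mul]

def subalgTE (k : Fin (N - 1)) : Subalgebra K (En N) := Algebra.adjoin K {T k, E k}

@[simp]
theorem T_mem_subalgTE (k : Fin (N - 1)) : T k ∈ subalgTE k :=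
  Algebra.subset_adjoin (Set.mem_insert _ _)

@[simp]
theorem E_mem_subalgTE (k : Fin (N - 1)) : E k ∈ subalgTE k :=
  Algebra.subset_adjoin (Set.mem_insert_of_mem _ rfl)

@[simp]
theorem Tinv_mem_subalgTE (k : Fin (N - 1)) : Tinv k ∈ subalgTE k :=
  add_mem (T_mem_subalgTE k) <| Subalgebra.smul_mem _
    (mul_mem (E_mem_subalgTE k) (sub_mem (T_mem_subalgTE k) (one_mem _))) _

theorem commute_of_mem_subalgTE_of_far {p q : Fin (N - 1)} (hpq : 1 < Nat.dist p q)
    {x y : En N} (hx : x ∈ subalgTE p) (hy : y ∈ subalgTE q) : Commute x y := by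
  refine Algebra.commute_of_mem_adjoin_of_forall_mem_commute hy fun y' hy' => ?_
  refine (Algebra.commute_of_mem_adjoin_of_forall_mem_commute hx fun x' hx' => ?_).symm
  have hqp : 1 < Nat.dist q p := Nat.dist_comm p q ▸ hpq
  rcases hx' with rfl | rfl <;> rcases hy' with rfl | rfl
  · exact commute_T_T_of_far hqp
  · exact commute_E_T_of_far hqp
  · exact (commute_E_T_of_far hpq).symm
  · exact commute_E_E q p

def IsLetter (k : Fin (N - 1)) (L : En N) : Prop := L = T k ∨ L = E k ∨ L = T k * E k

theorem IsLetter.mem_subalgTE {k : Fin (N - 1)} {L : En N} (hL : IsLetter k L) :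
    L ∈ subalgTE k := by
  rcases hL with rfl | rfl | rfl <;> simp [mul_mem]

def selfSpan (k : Fin (N - 1)) (w : En N) : Submodule K (En N) :=
  Submodule.span K (insert w {y | ∃ L, IsLetter k L ∧ y = L * w})

theorem self_mem_selfSpan (k : Fin (N - 1)) : w ∈ selfSpan k w :=
  Submodule.subset_span (Set.mem_insert _ _)

theorem mul_mem_selfSpan {k : Fin (N - 1)} {L : En N} (hL : IsLetter k L) :
    L * w ∈ selfSpan k w :=
  Submodule.subset_span (Set.mem_insert_of_mem _ ⟨L, hL, rfl⟩)

theorem gen_mul_mem_selfSpan {k : Fin (N - 1)} {g L : En N} (hg : g = T k ∨ g = E k)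
    (hL : IsLetter k L) : g * (L * w) ∈ selfSpan k w := by
  have hT : IsLetter k (T k) := .inl rfl
  have hE : IsLetter k (E k) := .inr (.inl rfl)
  have hTE : IsLetter k (T k * E k) := .inr (.inr rfl)
  rcases hg with rfl | rfl <;> rcases hL with rfl | rfl | rfl
  · rw [T_mul_T_self_mul, E_mul_T_self_mul]
    exact sub_mem (add_mem (self_mem_selfSpan w k) (Submodule.smul_mem _ _
      (mul_mem_selfSpan w hE))) (Submodule.smul_mem _ _ (mul_mem_selfSpan w hTE))
  · rw [← mul_assoc]
    exact mul_mem_selfSpan w hTE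
  · rw [T_mul_TE_self_mul]
    exact sub_mem (add_mem (mul_mem_selfSpan w hE) (Submodule.smul_mem _ _
      (mul_mem_selfSpan w hE))) (Submodule.smul_mem _ _ (mul_mem_selfSpan w hTE))
  · rw [E_mul_T_self_mul]
    exact mul_mem_selfSpan w hTE
  · rw [E_mul_E_self_mul]
    exact mul_mem_selfSpan w hE
  · rw [E_mul_TE_self_mul]
    exact mul_mem_selfSpan w hTE

def adjSpan (a b : Fin (N - 1)) (w : En N) : Submodule K (En N) :=
  Submodule.span K
    {y | ∃ La Lb h, IsLetter a La ∧ IsLetter b Lb ∧ h ∈ subalgTE a ∧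
      y = La * (Lb * (h * w))}

theorem mul_mul_mul_mem_adjSpan {La Lb h : En N} (hLa : IsLetter a La) (hLb : IsLetter b Lb)
    (hh : h ∈ subalgTE a) : La * (Lb * (h * w)) ∈ adjSpan a b w :=
  Submodule.subset_span ⟨La, Lb, h, hLa, hLb, hh, rfl⟩

theorem mul_mul_mem_adjSpan {La Lb : En N} (hLa : IsLetter a La) (hLb : IsLetter b Lb) :
    La * (Lb * w) ∈ adjSpan a b w := by
  simpa only [one_mul] using mul_mul_mul_mem_adjSpan w hLa hLb (one_mem _)

theorem gen_mul_mem_adjSpan (hd : Nat.dist a b = 1) {g La Lb : En N} (hg : g = T b ∨ g = E b)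
    (hLa : IsLetter a La) (hLb : IsLetter b Lb) : g * (La * (Lb * w)) ∈ adjSpan a b w := by
  rcases hg with rfl | rfl <;> rcases hLa with rfl | rfl | rfl <;>
    rcases hLb with rfl | rfl | rfl <;>
    simp only [Adj.T_T_T w hd, Adj.T_T_E w hd, Adj.T_T_TE w hd, Adj.T_E_T w hd, Adj.T_E_E w hd,
      Adj.T_E_TE w hd, Adj.T_TE_T w hd, Adj.T_TE_E w hd, Adj.T_TE_TE w hd, Adj.E_T_T w hd,
      Adj.E_T_E w hd, Adj.E_T_TE w hd, Adj.E_E_T w hd, Adj.E_E_E w, Adj.E_E_TE w hd,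
      Adj.E_TE_T w hd, Adj.E_TE_E w hd, Adj.E_TE_TE w hd] <;>
    repeat' first | apply sub_mem | apply add_mem | apply Submodule.smul_mem
  all_goals first
    | exact mul_mul_mul_mem_adjSpan w (by simp [IsLetter]) (by simp [IsLetter]) (by simp [mul_mem])
    | exact mul_mul_mem_adjSpan w (by simp [IsLetter]) (by simp [IsLetter])

end Relations

section Chains

variable {n : ℕ}

theorem one_lt_dist {p m : ℕ} (h : p + 2 ≤ m ∨ m + 2 ≤ p) : 1 < Nat.dist p m := by
  unfold Nat.dist
  omega

def IsChain (i : ℕ) (Y : ℕ → En (n + 1)) : Prop :=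
  ∀ (j : ℕ) (_ : i ≤ j) (hj : j < n), IsLetter ⟨j, hj⟩ (Y j)

def IsChainProd (i : ℕ) (p : En (n + 1)) : Prop := ∃ Y, IsChain i Y ∧ p = prodIco Y i n

def chainSpan (n : ℕ) : Submodule K (En (n + 1)) :=
  Submodule.span K ((An n : Set (En (n + 1))) ∪
    {z | ∃ i, i < n ∧ ∃ (Y : ℕ → En (n + 1)) (x : En (n + 1)),
      x ∈ An n ∧ IsChain i Y ∧ z = prodIco Y i n * x})

theorem mem_chainSpan_of_mem_An {x : En (n + 1)} (hx : x ∈ An n) : x ∈ chainSpan n :=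
  Submodule.subset_span (.inl hx)

theorem IsChainProd.mul_mem_chainSpan {i : ℕ} {p x : En (n + 1)} (hp : IsChainProd i p)
    (hx : x ∈ An n) : p * x ∈ chainSpan n := by
  obtain ⟨Y, hY, rfl⟩ := hp
  rcases lt_or_ge i n with hi | hi
  · exact Submodule.subset_span (.inr ⟨i, hi, Y, x, hx, hY, rfl⟩)
  · rw [prodIco_of_le Y hi, one_mul]
    exact mem_chainSpan_of_mem_An hx

theorem IsChainProd.prodIco_mul {i k : ℕ} (hik : i ≤ k) (hkn : k ≤ n) {Y : ℕ → En (n + 1)}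
    (hY : ∀ j, i ≤ j → j < k → ∀ hj : j < n, IsLetter ⟨j, hj⟩ (Y j)) {p : En (n + 1)}
    (hp : IsChainProd k p) : IsChainProd i (prodIco Y i k * p) := by
  obtain ⟨Z, hZ, rfl⟩ := hp
  refine ⟨fun j => if j < k then Y j else Z j, fun j hij hj => ?_, ?_⟩
  · by_cases hjk : j < k
    · simpa only [if_pos hjk] using hY j hij hjk hj
    · simpa only [if_neg hjk] using hZ j (not_lt.1 hjk) hj
  · rw [← prodIco_mul_prodIco _ hik hkn]
    congr 1
    · exact prodIco_congr fun m _ hm => (if_pos hm).symm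
    · exact prodIco_congr fun m hm _ => (if_neg (not_lt.2 hm)).symm

theorem IsChainProd.letter_mul {k : ℕ} (hk : k < n) {L p : En (n + 1)}
    (hL : IsLetter ⟨k, hk⟩ L) (hp : IsChainProd (k + 1) p) : IsChainProd k (L * p) := by
  have h := hp.prodIco_mul (Y := fun _ => L) k.le_succ hk fun j h₁ h₂ _ => by
    obtain rfl : j = k := by omega
    exact hL
  rwa [prodIco_eq_mul _ k.lt_succ_self, prodIco_of_le _ le_rfl, mul_one] at h

theorem isChainProd_prodIco {i : ℕ} {Y : ℕ → En (n + 1)} (hY : IsChain i Y) :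
    IsChainProd i (prodIco Y i n) :=
  ⟨Y, hY, rfl⟩

theorem subalgTE_le_An {a : Fin (n + 1 - 1)} (ha : (a : ℕ) < n - 1) : subalgTE a ≤ An n :=
  Algebra.adjoin_le <| by
    rintro x (rfl | rfl)
    · exact Algebra.subset_adjoin ⟨a, ha, .inl rfl⟩
    · exact Algebra.subset_adjoin ⟨a, ha, .inr rfl⟩

theorem commute_prodIco_of_far {p : Fin (n + 1 - 1)} {z : En (n + 1)} (hz : z ∈ subalgTE p)
    {i j : ℕ} (hj : j ≤ n) {Y : ℕ → En (n + 1)} (hY : IsChain i Y)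
    (hfar : ∀ m, i ≤ m → m < j → 1 < Nat.dist p m) : Commute z (prodIco Y i j) :=
  Commute.prodIco_right fun m h₁ h₂ =>
    commute_of_mem_subalgTE_of_far (q := ⟨m, by omega⟩) (hfar m h₁ h₂) hz
      (hY m h₁ (by omega)).mem_subalgTE

theorem isLetter_of_gen {k : Fin (n + 1 - 1)} {g : En (n + 1)} (hg : g = T k ∨ g = E k) :
    IsLetter k g :=
  hg.imp_right .inl

theorem isChainProd_one_of_le {i : ℕ} (hi : n ≤ i) : IsChainProd (n := n) i 1 :=
  ⟨fun _ => 1, fun j hj hjn => absurd hjn (by omega), (prodIco_of_le _ hi).symm⟩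

section GenMul

variable {k : ℕ} (hk : k < n) {g : En (n + 1)} {i : ℕ} {Y : ℕ → En (n + 1)} {x : En (n + 1)}

theorem gen_mul_mem_chainSpan_of_far (hg : g = T ⟨k, hk⟩ ∨ g = E ⟨k, hk⟩) (hi : i < n)
    (hki : k + 1 < i) (hY : IsChain i Y) (hx : x ∈ An n) :
    g * (prodIco Y i n * x) ∈ chainSpan n := by
  have hgA : g ∈ An n :=
    subalgTE_le_An (show k < n - 1 by omega) (isLetter_of_gen hg).mem_subalgTE
  have hcomm : Commute g (prodIco Y i n) :=
    commute_prodIco_of_far (isLetter_of_gen hg).mem_subalgTE le_rfl hY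
      fun m h₁ _ => one_lt_dist (p := k) (.inl (by omega))
  rw [← mul_assoc, hcomm.eq, mul_assoc]
  exact (isChainProd_prodIco hY).mul_mem_chainSpan (mul_mem hgA hx)

theorem gen_mul_mem_chainSpan_of_eq (hg : g = T ⟨k, hk⟩ ∨ g = E ⟨k, hk⟩)
    (hY : IsChain k Y) (hx : x ∈ An n) : g * (prodIco Y k n * x) ∈ chainSpan n := by
  have hrest : IsChainProd (k + 1) (prodIco Y (k + 1) n) :=
    isChainProd_prodIco fun j hj => hY j (by omega)
  rw [prodIco_eq_mul Y hk, mul_assoc]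
  refine Submodule.span_le.2 ?_ (gen_mul_mem_selfSpan _ hg (hY k le_rfl hk))
  rintro _ (rfl | ⟨L, hL, rfl⟩)
  · exact hrest.mul_mem_chainSpan hx
  · rw [← mul_assoc]
    exact (hrest.letter_mul hk hL).mul_mem_chainSpan hx

theorem gen_mul_mem_chainSpan_of_lt (hg : g = T ⟨k, hk⟩ ∨ g = E ⟨k, hk⟩) (hik : i < k)
    (hY : IsChain i Y) (hx : x ∈ An n) : g * (prodIco Y i n * x) ∈ chainSpan n := by
  obtain ⟨a, rfl⟩ : ∃ a, k = a + 1 := ⟨k - 1, by omega⟩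
  have hd : Nat.dist a (a + 1) = 1 := by unfold Nat.dist; omega
  have hcomm : Commute g (prodIco Y i a) :=
    commute_prodIco_of_far (isLetter_of_gen hg).mem_subalgTE (by omega) hY
      fun m _ hm => one_lt_dist (p := a + 1) (.inr (by omega))
  have hsplit : prodIco Y i n * x =
      prodIco Y i a * (Y a * (Y (a + 1) * (prodIco Y (a + 2) n * x))) := by
    rw [← prodIco_mul_prodIco Y (by omega : i ≤ a) (by omega : a ≤ n),
      prodIco_eq_mul Y (by omega : a < n), prodIco_eq_mul Y hk]
    simp only [mul_assoc]
  rw [hsplit, ← mul_assoc, hcomm.eq, mul_assoc]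
  refine (Submodule.span_le.2 ?_ : adjSpan _ _ _ ≤ (chainSpan n).comap (LinearMap.mulLeft K _))
    (gen_mul_mem_adjSpan _ hd hg (hY a (by omega) (by omega)) (hY (a + 1) (by omega) hk))
  rintro _ ⟨La, Lb, h, hLa, hLb, hh, rfl⟩
  rw [SetLike.mem_coe, Submodule.mem_comap, LinearMap.mulLeft_apply]
  have hrest : IsChain (a + 2) Y := fun j hj => hY j (by omega)
  have hh' : Commute h (prodIco Y (a + 2) n) :=
    commute_prodIco_of_far hh le_rfl hrest fun m h₁ _ => one_lt_dist (p := a) (.inl (by omega))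
  have hchain : IsChainProd i (prodIco Y i a * (La * (Lb * prodIco Y (a + 2) n))) :=
    (((isChainProd_prodIco hrest).letter_mul hk hLb).letter_mul
      (by omega) hLa).prodIco_mul (by omega) (by omega) fun j h₁ _ hj => hY j h₁ hj
  have hhA : h ∈ An n := subalgTE_le_An (show a < n - 1 by omega) hh
  convert hchain.mul_mem_chainSpan (mul_mem hhA hx) using 1
  simp only [← mul_assoc, hh'.eq]

end GenMul

theorem gen_mul_mem_chainSpan {k : ℕ} (hk : k < n) {g : En (n + 1)}
    (hg : g = T ⟨k, hk⟩ ∨ g = E ⟨k, hk⟩) {z : En (n + 1)} (hz : z ∈ chainSpan n) :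
    g * z ∈ chainSpan n := by
  induction hz using Submodule.span_induction with
  | zero => simp
  | add y z _ _ hy hz => simpa only [mul_add] using add_mem hy hz
  | smul r y _ hy => simpa only [mul_smul_comm] using Submodule.smul_mem _ r hy
  | mem y hy =>
    rcases hy with hy | ⟨i, hi, Y, x, hx, hY, rfl⟩
    · rcases lt_or_ge k (n - 1) with hkn | hkn
      · exact mem_chainSpan_of_mem_An
          (mul_mem (subalgTE_le_An hkn (isLetter_of_gen hg).mem_subalgTE) hy)
      · simpa using ((isChainProd_one_of_le (by omega)).letter_mul hk
          (isLetter_of_gen hg)).mul_mem_chainSpan hy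
    · rcases lt_trichotomy (k + 1) i with hki | rfl | hik
      · exact gen_mul_mem_chainSpan_of_far hk hg hi hki hY hx
      · rw [← mul_assoc]
        exact ((isChainProd_prodIco hY).letter_mul hk (isLetter_of_gen hg)).mul_mem_chainSpan hx
      · rcases Nat.lt_succ_iff_lt_or_eq.1 hik with hik | rfl
        · exact gen_mul_mem_chainSpan_of_lt hk hg hik hY hx
        · exact gen_mul_mem_chainSpan_of_eq hk hg hY hx

theorem mem_chainSpan (z : En (n + 1)) : z ∈ chainSpan n := by
  obtain ⟨w, rfl⟩ := RingQuot.mkAlgHom_surjective K (EnRel (n + 1)) z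
  suffices ∀ y ∈ chainSpan n, RingQuot.mkAlgHom K (EnRel (n + 1)) w * y ∈ chainSpan n by
    simpa using this 1 (mem_chainSpan_of_mem_An (one_mem _))
  induction w using FreeAlgebra.induction with
  | grade0 r =>
    intro y hy
    rw [AlgHom.commutes, ← Algebra.smul_def]
    exact Submodule.smul_mem _ r hy
  | grade1 g =>
    intro y hy
    cases g with
    | T i => exact gen_mul_mem_chainSpan i.isLt (.inl rfl) hy
    | E i => exact gen_mul_mem_chainSpan i.isLt (.inr rfl) hy
  | mul v w hv hw =>
    intro y hy
    rw [map_mul, mul_assoc]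
    exact hv _ (hw _ hy)
  | add v w hv hw =>
    intro y hy
    rw [map_add, add_mul]
    exact add_mem (hv _ hy) (hw _ hy)

end Chains

end En

theorem stmt4_general (n : ℕ) (z : En (n + 1)) :
    z ∈ Submodule.span K
      ((An n : Set (En (n + 1))) ∪
        {z : En (n + 1) | ∃ (i : ℕ), i < n ∧ ∃ (Y : ℕ → En (n + 1)) (x : En (n + 1)),
          x ∈ An n ∧
          (∀ (j : ℕ) (_ : i ≤ j) (hj : j < n),
            Y j = T ⟨j, hj⟩ ∨ Y j = E ⟨j, hj⟩ ∨ Y j = T ⟨j, hj⟩ * E ⟨j, hj⟩) ∧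
          z = ((List.Ico i n).map Y).prod * x}) :=
  En.mem_chainSpan z

/-- Every element of `ℰ_{n+1}(u)` lies in the `K`-linear span of `A_n` together
with the products `Y_i Y_{i+1} ⋯ Y_n ⬝ x` where each `Y_j ∈ {T_j, E_j, T_j E_j}`
and `x ∈ A_n`. -/
theorem stmt4 (n : ℕ) (hn : 2 ≤ n) (z : En (n + 1)) :
    z ∈ Submodule.span K
      ((An n : Set (En (n + 1))) ∪
        {z : En (n + 1) | ∃ (i : ℕ), i < n ∧ ∃ (Y : ℕ → En (n + 1)) (x : En (n + 1)),
          x ∈ An n ∧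
          (∀ (j : ℕ) (_ : i ≤ j) (hj : j < n),
            Y j = T ⟨j, hj⟩ ∨ Y j = E ⟨j, hj⟩ ∨ Y j = T ⟨j, hj⟩ * E ⟨j, hj⟩) ∧
          z = ((List.Ico i n).map Y).prod * x}) :=
  stmt4_general n z
end
end

section
/- In ℰ_n(u), for all i, j with |i−j| = 1, writing T_k⁻¹ := T_k + (u−1)E_kT_k + (1−u)E_k, one has T_i⁻¹E_jT_i = T_j⁻¹E_iT_j. -/
noncomputable section

open FreeAlgebra

/-- The element `T_k⁻¹ := T_k + (u-1) E_k T_k + (1-u) E_k`, which is a two-sided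
inverse of `T_k` in `ℰ_n(u)`. -/
def Tinv {n : ℕ} (k : Fin (n - 1)) : En n :=
  T k + (u - 1) • (E k * T k) + (1 - u) • E k

/-!
Relation (7) reads `E_j (T_i T_j) = (T_i T_j) E_i`, so conjugating gives
`T_i⁻¹ E_j T_i = T_j E_i T_j⁻¹`. Relations (8) and (9) show that `E_i` commutes with
`T_j² = 1 + (u⁻¹ - 1)(E_j - E_j T_j)`, and the same conjugation argument turns this into
`T_j⁻¹ E_i T_j = T_j E_i T_j⁻¹`.
-/

theorem Units.inv_mul_mul_eq_mul_mul_inv_of_semiconjBy {M : Type*} [Monoid M] (a b : Mˣ)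
    {x y : M} (h : SemiconjBy (a * b : M) y x) : ↑a⁻¹ * x * a = b * y * ↑b⁻¹ := by
  rw [Units.eq_mul_inv_iff_mul_eq]
  simp only [mul_assoc]
  rw [← h.eq, mul_assoc, Units.inv_mul_cancel_left]

section Relations

variable {n : ℕ}

theorem isIdempotentElem_E (i : Fin (n - 1)) : IsIdempotentElem (E i : En n) := by
  show E i * E i = E i
  simpa [E, map_mul] using RingQuot.mkAlgHom_rel K (EnRel.Eidem i)

theorem commute_E_E (i j : Fin (n - 1)) : Commute (E i : En n) (E j) := by
  show E i * E j = E j * E i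
  simpa [E, map_mul] using RingQuot.mkAlgHom_rel K (EnRel.EE i j)

theorem commute_E_T (i : Fin (n - 1)) : Commute (E i : En n) (T i) := by
  show E i * T i = T i * E i
  simpa [E, T, map_mul] using RingQuot.mkAlgHom_rel K (EnRel.ET i)

theorem semiconjBy_T_mul_T_E {i j : Fin (n - 1)} (h : Nat.dist i j = 1) :
    SemiconjBy (T i * T j : En n) (E i) (E j) := by
  show T i * T j * E i = E j * (T i * T j)
  simpa [E, T, map_mul] using (RingQuot.mkAlgHom_rel K (EnRel.ETT h)).symm

theorem E_mul_E_mul_T {i j : Fin (n - 1)} (h : Nat.dist i j = 1) :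
    (E i : En n) * E j * T j = T j * (E i * E j) := by
  have hEET := RingQuot.mkAlgHom_rel K (EnRel.EET h)
  have hETE := RingQuot.mkAlgHom_rel K (EnRel.ETE h)
  simp only [E, T, map_mul] at hEET hETE ⊢
  exact hEET.trans hETE

theorem T_mul_T_self (i : Fin (n - 1)) :
    (T i : En n) * T i = 1 + (u⁻¹ - 1) • (E i * (1 - T i)) := by
  simpa [E, T, map_mul, map_sub, map_smul] using RingQuot.mkAlgHom_rel K (EnRel.Tsq i)

end Relations

section Inverse

-- `match_scalars` has to see the `ℕ`- and `ℤ`-scalars it creates as elements of `K`.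
attribute [local instance 2000] Semiring.toNatAlgebra Ring.toIntAlgebra

variable {n : ℕ}

theorem E_mul_T_mul_T_self (i : Fin (n - 1)) :
    (E i : En n) * (T i * T i) = u⁻¹ • E i + (1 - u⁻¹) • (E i * T i) := by
  rw [T_mul_T_self, mul_add, mul_one, mul_smul_comm, ← mul_assoc, (isIdempotentElem_E i).eq,
    mul_sub, mul_one, smul_sub]
  match_scalars <;> ring

theorem T_mul_Tinv (i : Fin (n - 1)) : (T i : En n) * Tinv i = 1 := by
  have hu : u ≠ 0 := RatFunc.X_ne_zero
  rw [Tinv, mul_add, mul_add, mul_smul_comm, mul_smul_comm, ← mul_assoc, ← (commute_E_T i).eq,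
    mul_assoc, E_mul_T_mul_T_self, T_mul_T_self]
  simp only [mul_sub, mul_one, smul_add, smul_sub, smul_smul]
  match_scalars <;> field_simp <;> ring

theorem commute_T_Tinv (i : Fin (n - 1)) : Commute (T i : En n) (Tinv i) := by
  have hTE := (commute_E_T i).symm
  exact ((Commute.refl _).add_right ((hTE.mul_right (.refl _)).smul_right _)).add_right
    (hTE.smul_right _)

def unitT (i : Fin (n - 1)) : (En n)ˣ where
  val := T i
  inv := Tinv i
  val_inv := T_mul_Tinv i
  inv_val := (commute_T_Tinv i).eq ▸ T_mul_Tinv i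

end Inverse

theorem commute_T_mul_T_E {n : ℕ} {i j : Fin (n - 1)} (h : Nat.dist i j = 1) :
    Commute (T j * T j : En n) (E i) := by
  have hET : Commute (E i : En n) (E j * T j) := by
    calc E i * (E j * T j) = T j * (E i * E j) := by rw [← mul_assoc, E_mul_E_mul_T h]
      _ = E j * T j * E i := by rw [(commute_E_E i j).eq, ← mul_assoc, ← (commute_E_T j).eq]
  rw [T_mul_T_self, mul_sub, mul_one]
  exact ((Commute.one_right _).add_right (((commute_E_E i j).sub_right hET).smul_right _)).symm

theorem stmt9_general (n : ℕ) (i j : Fin (n - 1)) (hij : Nat.dist i j = 1) :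
    Tinv i * E j * T i = Tinv j * E i * T j := by
  have hi := (unitT i).inv_mul_mul_eq_mul_mul_inv_of_semiconjBy (unitT j) (semiconjBy_T_mul_T_E hij)
  have hj := (unitT j).inv_mul_mul_eq_mul_mul_inv_of_semiconjBy (unitT j) (commute_T_mul_T_E hij)
  exact hi.trans hj.symm

/-- For `|i - j| = 1`: `T_i⁻¹ E_j T_i = T_j⁻¹ E_i T_j`. -/
theorem stmt9 (n : ℕ) (hn : 2 ≤ n) (i j : Fin (n - 1)) (hij : Nat.dist i j = 1) :
    Tinv i * E j * T i = Tinv j * E i * T j :=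
  stmt9_general n i j hij
end
end

section
/- In ℰ_n(u), for all i, j with |i−j| = 1, one has u(T_iE_jT_i − T_jE_iT_j) = (u−1)(E_jT_iE_j − E_iT_jE_i). -/
noncomputable section

open FreeAlgebra

/-!
Both sides of `T i * T i * (T j * E i * T j) = T i * E j * T i * (T j * T j)`, a rearrangement
of the relation `E j * T i * T j = T i * T j * E i`, are expanded by the quadratic relation.
Every correction term is a multiple of `M = E i * E j`, which is absorbed by `E i` and `E j`, and on
such elements `T k ^ 2` acts as `1 + (u⁻¹ - 1) (1 - T k)`. Comparing the two expansions gives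
`T i E j T i - T j E i T j = (u⁻¹ - 1) (T j M - T i M)`; since `E j T i E j = T i M` and
`E i T j E i = T j M`, multiplying by `u` yields the claim.
-/

namespace En

variable {n : ℕ}

theorem mkAlgHom_fT (i : Fin (n - 1)) : RingQuot.mkAlgHom K (EnRel n) (fT i) = T i := rfl

theorem mkAlgHom_fE (i : Fin (n - 1)) : RingQuot.mkAlgHom K (EnRel n) (fE i) = E i := rfl

theorem E_mul_self (i : Fin (n - 1)) : E i * E i = E i := by
  simpa only [map_mul, mkAlgHom_fE] using RingQuot.mkAlgHom_rel K (EnRel.Eidem (n := n) i)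

theorem E_mul_comm (i j : Fin (n - 1)) : E i * E j = E j * E i := by
  simpa only [map_mul, mkAlgHom_fE] using RingQuot.mkAlgHom_rel K (EnRel.EE (n := n) i j)

theorem E_mul_T_self (i : Fin (n - 1)) : E i * T i = T i * E i := by
  simpa only [map_mul, mkAlgHom_fT, mkAlgHom_fE] using
    RingQuot.mkAlgHom_rel K (EnRel.ET (n := n) i)

theorem T_mul_self (i : Fin (n - 1)) : T i * T i = 1 + (u⁻¹ - 1) • (E i * (1 - T i)) := by
  simpa only [map_mul, map_add, map_sub, map_one, map_smul, mkAlgHom_fT, mkAlgHom_fE] using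
    RingQuot.mkAlgHom_rel K (EnRel.Tsq (n := n) i)

theorem T_mul_T_mul (k : Fin (n - 1)) (x : En n) :
    T k * T k * x = x + (u⁻¹ - 1) • (E k * x - T k * (E k * x)) := by
  rw [T_mul_self, add_mul, one_mul, smul_mul_assoc, mul_one_sub, sub_mul, E_mul_T_self,
    mul_assoc]

theorem mul_T_mul_T (k : Fin (n - 1)) (x : En n) :
    x * (T k * T k) = x + (u⁻¹ - 1) • (x * E k - x * E k * T k) := by
  rw [T_mul_self, mul_add, mul_one, mul_smul_comm, mul_one_sub, mul_sub, mul_assoc]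

theorem T_mul_T_mul_of_E_mul_eq {k : Fin (n - 1)} {y : En n} (hy : E k * y = y) :
    T k * T k * y = y + (u⁻¹ - 1) • (y - T k * y) := by
  rw [T_mul_T_mul, hy]

section Adjacent

variable {i j : Fin (n - 1)}

theorem E_mul_T_mul_T (hij : Nat.dist i j = 1) : E j * (T i * T j) = T i * T j * E i := by
  simpa only [map_mul, mkAlgHom_fT, mkAlgHom_fE] using
    RingQuot.mkAlgHom_rel K (EnRel.ETT (n := n) hij)

theorem E_mul_E_mul_T (hij : Nat.dist i j = 1) : E i * E j * T j = E i * T j * E i := by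
  simpa only [map_mul, mkAlgHom_fT, mkAlgHom_fE] using
    RingQuot.mkAlgHom_rel K (EnRel.EET (n := n) hij)

theorem E_mul_T_mul_E (hij : Nat.dist i j = 1) : E i * T j * E i = T j * (E i * E j) := by
  simpa only [map_mul, mkAlgHom_fT, mkAlgHom_fE] using
    RingQuot.mkAlgHom_rel K (EnRel.ETE (n := n) hij)

theorem E_mul_T_mul_E_swap (hij : Nat.dist i j = 1) :
    E j * T i * E j = T i * (E i * E j) := by
  rw [E_mul_T_mul_E ((Nat.dist_comm j i).trans hij), E_mul_comm j i]

theorem E_mul_E_mul_T_eq_T_mul (hij : Nat.dist i j = 1) : E i * E j * T j = T j * (E i * E j) :=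
  (E_mul_E_mul_T hij).trans (E_mul_T_mul_E hij)

theorem E_mul_T_mul_E_mul_E (hij : Nat.dist i j = 1) :
    E i * (T j * (E i * E j)) = T j * (E i * E j) := by
  rw [← mul_assoc, ← mul_assoc, E_mul_T_mul_E hij, mul_assoc, mul_assoc, E_mul_self]

theorem T_mul_T_mul_T_mul_E_mul_T (hij : Nat.dist i j = 1) :
    T i * T i * (T j * E i * T j) = T i * E j * T i * (T j * T j) := by
  calc T i * T i * (T j * E i * T j) = T i * (T i * T j * E i) * T j := by simp only [mul_assoc]
    _ = T i * (E j * (T i * T j)) * T j := by rw [E_mul_T_mul_T hij]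
    _ = T i * E j * T i * (T j * T j) := by simp only [mul_assoc]

theorem T_mul_E_mul_T_sub (hij : Nat.dist i j = 1) :
    T i * E j * T i - T j * E i * T j =
      (u⁻¹ - 1) • (T j * (E i * E j) - T i * (E i * E j)) := by
  have hEiM : E i * (E i * E j) = E i * E j := by rw [← mul_assoc, E_mul_self]
  have hEjM : E j * (E i * E j) = E i * E j := by
    rw [← mul_assoc, E_mul_comm j i, mul_assoc, E_mul_self]
  have hE_TET : E i * (T j * E i * T j) = T j * T j * (E i * E j) :=
    calc E i * (T j * E i * T j) = E i * T j * E i * T j := by simp only [mul_assoc]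
      _ = T j * (E i * E j * T j) := by rw [E_mul_T_mul_E hij, mul_assoc]
      _ = T j * T j * (E i * E j) := by rw [E_mul_E_mul_T_eq_T_mul hij, mul_assoc]
  have hTET_E : T i * E j * T i * E j = T i * T i * (E i * E j) :=
    calc T i * E j * T i * E j = T i * (E j * T i * E j) := by simp only [mul_assoc]
      _ = T i * T i * (E i * E j) := by rw [E_mul_T_mul_E_swap hij, mul_assoc]
  have hMTj : T i * T i * (E i * E j) * T j = T i * T i * (T j * (E i * E j)) := by
    rw [mul_assoc, E_mul_E_mul_T_eq_T_mul hij]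
  have key := T_mul_T_mul_T_mul_E_mul_T hij
  rw [T_mul_T_mul, hE_TET, mul_T_mul_T, hTET_E, hMTj, T_mul_T_mul_of_E_mul_eq hEjM,
    T_mul_T_mul_of_E_mul_eq hEiM, T_mul_T_mul_of_E_mul_eq (E_mul_T_mul_E_mul_E hij)] at key
  rw [← sub_eq_zero, ← sub_eq_zero_of_eq key.symm]
  simp only [mul_add, mul_sub, mul_smul_comm, smul_add, smul_sub]
  abel

end Adjacent

end En

theorem u_ne_zero : u ≠ 0 := RatFunc.X_ne_zero

theorem stmt10_general (n : ℕ) (i j : Fin (n - 1)) (hij : Nat.dist i j = 1) :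
    u • (T i * E j * T i - T j * E i * T j) =
      (u - 1) • (E j * T i * E j - E i * T j * E i) := by
  have hu : u * (u⁻¹ - 1) = -(u - 1) := by
    rw [mul_sub, mul_inv_cancel₀ u_ne_zero, mul_one, neg_sub]
  rw [En.T_mul_E_mul_T_sub hij, smul_smul, hu, neg_smul, ← smul_neg, neg_sub,
    En.E_mul_T_mul_E_swap hij, En.E_mul_T_mul_E hij]

/-- For `|i - j| = 1`:
`u (T_i E_j T_i - T_j E_i T_j) = (u-1)(E_j T_i E_j - E_i T_j E_i)`. -/
theorem stmt10 (n : ℕ) (hn : 2 ≤ n) (i j : Fin (n - 1)) (hij : Nat.dist i j = 1) :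
    u • (T i * E j * T i - T j * E i * T j) =
      (u - 1) • (E j * T i * E j - E i * T j * E i) :=
  stmt10_general n i j hij
end
end
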